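/- arXiv:1509.08465 — 2 statements merged into one kernel-verified Lean document; each statement's English description precedes it below -/
import Mathlib

section
/- The greedy set cover algorithm, which at each stage selects the set containing the largest number of uncovered elements, produces a cover of size at most H(s) times the size of an optimal cover, where s is the size of the largest set in the family. -/
open Finset

/-- The set of elements covered by the first `i` chosen sets. -/
def coveredBy {α : Type*} [DecidableEq α] (L : List (Finset α)) (i : ℕ) : Finset α :=
  (L.take i).foldr (· ∪ ·) ∅

lemma foldr_union_init {α : Type*} [DecidableEq α] (l : List (Finset α)) (b : Finset α) :
    l.foldr (· ∪ ·) b = l.foldr (· ∪ ·) ∅ ∪ b := by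
  induction l with
  | nil => simp
  | cons a l ih => simp [ih, union_assoc]

lemma coveredBy_succ {α : Type*} [DecidableEq α] (L : List (Finset α)) (i : ℕ)
    (h : i < L.length) :
    coveredBy L (i+1) = coveredBy L i ∪ L.get ⟨i, h⟩ := by
  unfold coveredBy
  rw [List.take_succ, List.getElem?_eq_getElem h]
  rw [List.foldr_append, foldr_union_init]
  simp [List.get_eq_getElem]

lemma sum_biUnion_le' {α β : Type*} [DecidableEq α] [DecidableEq β] (s : Finset β) (t : β → Finset α)
    (f : α → ℝ) (hf : ∀ x, 0 ≤ f x) :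
    ∑ x ∈ s.biUnion t, f x ≤ ∑ b ∈ s, ∑ x ∈ t b, f x := by
  induction s using Finset.induction with
  | empty => simp
  | insert _ _ h ih =>
    rename_i a s
    rw [Finset.biUnion_insert, Finset.sum_insert h]
    calc ∑ x ∈ t a ∪ s.biUnion t, f x
        ≤ ∑ x ∈ t a, f x + ∑ x ∈ s.biUnion t, f x := by
          have h2 := Finset.sum_union_inter (s₁ := t a) (s₂ := s.biUnion t) (f := f)
          have h3 : 0 ≤ ∑ x ∈ t a ∩ s.biUnion t, f x := Finset.sum_nonneg fun x _ => hf x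
          linarith
      _ ≤ _ := by exact add_le_add_right ih _


/-- The greedy set cover algorithm, which at each stage selects a set containing the
largest number of uncovered elements, produces a cover of size at most H(s) times the
size of any (in particular, an optimal) cover, where s is the size of the largest set. -/
theorem stmt_4 {α : Type*} [DecidableEq α] (X : Finset α) (S : Finset (Finset α))
    (hsub : ∀ T ∈ S, T ⊆ X) (hcov : ∀ x ∈ X, ∃ T ∈ S, x ∈ T)
    (L : List (Finset α))
    (hmem : ∀ i (h : i < L.length), L.get ⟨i, h⟩ ∈ S)
    (hgreedy : ∀ i (h : i < L.length), ∀ T ∈ S,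
      (T \ coveredBy L i).card ≤ ((L.get ⟨i, h⟩) \ coveredBy L i).card)
    (hnew : ∀ i (h : i < L.length), ((L.get ⟨i, h⟩) \ coveredBy L i).Nonempty)
    (hdone : coveredBy L L.length = X)
    (C : Finset (Finset α)) (hC : C ⊆ S) (hCcov : ∀ x ∈ X, ∃ T ∈ C, x ∈ T)
    (s : ℕ) (hs : s = S.sup Finset.card) :
    (L.length : ℝ) ≤ (∑ k ∈ Finset.Icc 1 s, (1 : ℝ) / k) * C.card := by
  classical
  set n := L.length with hn
  set D : ℕ → Finset α := fun i => coveredBy L (i+1) \ coveredBy L i with hD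
  have hDeq : ∀ i (h : i < n), D i = L.get ⟨i, h⟩ \ coveredBy L i := by
    intro i h
    show coveredBy L (i+1) \ coveredBy L i = _
    rw [coveredBy_succ L i h]
    ext x; simp; tauto
  have hcard : ∀ i, i < n → 0 < (D i).card := by
    intro i h
    rw [hDeq i h]
    exact Finset.card_pos.mpr (hnew i h)
  have hDX : ∀ i, i < n → D i ⊆ X := by
    intro i h
    rw [hDeq i h]
    exact Finset.sdiff_subset.trans (hsub _ (hmem i h))
  have hmono : ∀ i, i < n → coveredBy L i ⊆ coveredBy L (i+1) := by
    intro i h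
    rw [coveredBy_succ L i h]
    exact Finset.subset_union_left
  set cost : α → ℝ := fun x => ∑ i ∈ Finset.range n,
      if x ∈ D i then 1/((D i).card : ℝ) else 0 with hcost
  have hcost_nonneg : ∀ x, 0 ≤ cost x := by
    intro x
    apply Finset.sum_nonneg
    intro i _
    split <;> positivity
  have hsumX : ∑ x ∈ X, cost x = n := by
    simp only [hcost]
    rw [Finset.sum_comm]
    have h1 : ∀ i ∈ Finset.range n,
        ∑ x ∈ X, (if x ∈ D i then (1:ℝ)/((D i).card) else 0) = 1 := by
      intro i hi
      rw [Finset.sum_ite_mem, Finset.inter_eq_right.mpr (hDX i (Finset.mem_range.mp hi)),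
        Finset.sum_const, nsmul_eq_mul, mul_one_div, div_self]
      exact_mod_cast (hcard i (Finset.mem_range.mp hi)).ne'
    rw [Finset.sum_congr rfl h1, Finset.sum_const, nsmul_eq_mul, Finset.card_range, mul_one]
  have hsumT : ∀ T ∈ S, ∑ x ∈ T, cost x ≤ ∑ k ∈ Finset.Icc 1 T.card, (1:ℝ)/k := by
    intro T hT
    have hrw : ∑ x ∈ T, cost x
        = ∑ i ∈ Finset.range n, ((T ∩ D i).card : ℝ)/((D i).card) := by
      simp only [hcost]
      rw [Finset.sum_comm]
      refine Finset.sum_congr rfl fun i _ => ?_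
      rw [Finset.sum_ite_mem, Finset.sum_const, nsmul_eq_mul, mul_one_div]
    rw [hrw]
    have key : ∀ j k, k + j = n → ∑ i ∈ Finset.Ico k n, ((T ∩ D i).card : ℝ)/((D i).card)
        ≤ ∑ m ∈ Finset.Icc 1 ((T \ coveredBy L k).card), (1:ℝ)/m := by
      intro j
      induction j with
      | zero =>
        intro k hk
        have : k = n := by omega
        subst this
        simp only [Finset.Ico_self, Finset.sum_empty]
        exact Finset.sum_nonneg fun m _ => by positivity
      | succ j ih =>
        intro k hk
        have hkn : k < n := by omega
        rw [Finset.sum_eq_sum_Ico_succ_bot hkn]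
        have ih' := ih (k+1) (by omega)
        set m := (T \ coveredBy L k).card with hm
        set m' := (T \ coveredBy L (k+1)).card with hm'
        set c := (D k).card with hc0
        have hsub' : T \ coveredBy L (k+1) ⊆ T \ coveredBy L k :=
          Finset.sdiff_subset_sdiff Finset.Subset.rfl (hmono k hkn)
        have hTD : T ∩ D k = (T \ coveredBy L k) \ (T \ coveredBy L (k+1)) := by
          show T ∩ (coveredBy L (k+1) \ coveredBy L k) = _
          ext x
          have := hmono k hkn
          simp only [Finset.mem_inter, Finset.mem_sdiff]
          constructor
          · rintro ⟨h1, h2, h3⟩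
            exact ⟨⟨h1, h3⟩, fun h4 => h4.2 h2⟩
          · rintro ⟨⟨h1, h2⟩, h3⟩
            refine ⟨h1, ?_, h2⟩
            by_contra h4
            exact h3 ⟨h1, h4⟩
        have hcardTD : (T ∩ D k).card = m - m' := by
          rw [hTD, Finset.card_sdiff_of_subset hsub']
        have hmm' : m' ≤ m := Finset.card_le_card hsub'
        have hmc : m ≤ c := by
          have := hgreedy k hkn T hT
          rw [← hDeq k hkn] at this
          exact this
        have hcpos : 0 < c := hcard k hkn
        have hsplit : ∑ i ∈ Finset.Ioc 0 m', (1:ℝ)/i + ∑ i ∈ Finset.Ioc m' m, (1:ℝ)/i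
            = ∑ i ∈ Finset.Ioc 0 m, (1:ℝ)/i :=
          Finset.sum_Ioc_consecutive _ (Nat.zero_le m') hmm'
        have hstep : ((m - m' : ℕ) : ℝ)/c ≤ ∑ i ∈ Finset.Ioc m' m, (1:ℝ)/i := by
          have h1 : ∀ i ∈ Finset.Ioc m' m, (1:ℝ)/c ≤ 1/i := by
            intro i hi
            rw [Finset.mem_Ioc] at hi
            apply one_div_le_one_div_of_le
            · have : 0 < i := Nat.lt_of_le_of_lt (Nat.zero_le m') hi.1
              exact_mod_cast this
            · exact_mod_cast le_trans hi.2 hmc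
          have h2 := Finset.card_nsmul_le_sum (Finset.Ioc m' m) _ _ h1
          rw [Nat.card_Ioc] at h2
          calc ((m - m' : ℕ) : ℝ)/c = (m - m') • ((1:ℝ)/c) := by
                rw [nsmul_eq_mul, mul_one_div]
            _ ≤ _ := h2
        have hIoc : ∀ a : ℕ, Finset.Icc 1 a = Finset.Ioc 0 a := fun a => Finset.Icc_add_one_left_eq_Ioc 0 a
        rw [hIoc m]
        rw [hIoc m'] at ih'
        rw [hcardTD]
        linarith
    have := key n 0 (by omega)
    rw [Finset.range_eq_Ico]
    have h0 : coveredBy L 0 = ∅ := rfl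
    rw [h0, Finset.sdiff_empty] at this
    exact this
  have hbi : X ⊆ C.biUnion id := by
    intro x hx
    rw [Finset.mem_biUnion]
    obtain ⟨T, hT, hxT⟩ := hCcov x hx
    exact ⟨T, hT, hxT⟩
  have hHmono : ∀ T ∈ C, ∑ k ∈ Finset.Icc 1 T.card, (1:ℝ)/k ≤ ∑ k ∈ Finset.Icc 1 s, (1:ℝ)/k := by
    intro T hT
    apply Finset.sum_le_sum_of_subset_of_nonneg
    · exact Finset.Icc_subset_Icc le_rfl (hs ▸ Finset.le_sup (hC hT))
    · intro k _ _; positivity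
  calc (n : ℝ) = ∑ x ∈ X, cost x := hsumX.symm
    _ ≤ ∑ x ∈ C.biUnion id, cost x :=
        Finset.sum_le_sum_of_subset_of_nonneg hbi (fun x _ _ => hcost_nonneg x)
    _ ≤ ∑ T ∈ C, ∑ x ∈ id T, cost x := sum_biUnion_le' C id cost hcost_nonneg
    _ ≤ ∑ T ∈ C, ∑ k ∈ Finset.Icc 1 s, (1:ℝ)/k :=
        Finset.sum_le_sum fun T hT => le_trans (hsumT T (hC hT)) (hHmono T hT)
    _ = (∑ k ∈ Finset.Icc 1 s, (1:ℝ)/k) * C.card := by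
        rw [Finset.sum_const, nsmul_eq_mul, mul_comm]
end

section
/- The Golosov effective number of parties N_p = ∑_{i=1}^{N} 1/(1 + s₁²/s_i − s_i), where s_i are the seat shares (positive, summing to 1) and s₁ = max_i s_i, satisfies 1 ≤ N_p ≤ N, with N_p = N when all shares are equal. -/
/-- The Golosov effective number of parties N_p = ∑ᵢ 1/(1 + s₁²/sᵢ − sᵢ), for positive
seat shares summing to 1 with largest share s₁ = s i₀, satisfies 1 ≤ N_p ≤ N, with
N_p = N when all shares are equal. -/
theorem stmt_13 (N : ℕ) (hN : 0 < N) (s : Fin N → ℝ) (i₀ : Fin N)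
    (hpos : ∀ i, 0 < s i) (hsum : ∑ i, s i = 1) (hmax : ∀ i, s i ≤ s i₀) :
    1 ≤ ∑ i, 1 / (1 + (s i₀) ^ 2 / s i - s i) ∧
      ∑ i, 1 / (1 + (s i₀) ^ 2 / s i - s i) ≤ (N : ℝ) ∧
      ((∀ i j, s i = s j) → ∑ i, 1 / (1 + (s i₀) ^ 2 / s i - s i) = (N : ℝ)) := by
  have hle1 : ∀ i, s i ≤ 1 := by
    intro i
    calc s i ≤ ∑ j, s j := Finset.single_le_sum (fun j _ => (hpos j).le) (Finset.mem_univ i)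
    _ = 1 := hsum
  have hd1 : ∀ i, 1 ≤ 1 + (s i₀) ^ 2 / s i - s i := by
    intro i
    have : s i ≤ (s i₀) ^ 2 / s i := by
      rw [le_div_iff₀ (hpos i)]
      have := mul_le_mul (hmax i) (hmax i) (hpos i).le (hpos i₀).le
      nlinarith
    linarith
  have hdpos : ∀ i, 0 < 1 + (s i₀) ^ 2 / s i - s i := fun i => lt_of_lt_of_le one_pos (hd1 i)
  have hterm0 : (1 : ℝ) / (1 + (s i₀) ^ 2 / s i₀ - s i₀) = 1 := by
    have h := (hpos i₀).ne'
    have hc : (s i₀) ^ 2 / s i₀ = s i₀ := by rw [sq, mul_div_assoc, div_self h, mul_one]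
    rw [hc]
    norm_num
  refine ⟨?_, ?_, ?_⟩
  · calc (1:ℝ) = 1 / (1 + (s i₀) ^ 2 / s i₀ - s i₀) := hterm0.symm
    _ ≤ ∑ i, 1 / (1 + (s i₀) ^ 2 / s i - s i) :=
      Finset.single_le_sum (f := fun i => 1 / (1 + (s i₀) ^ 2 / s i - s i)) (fun i _ => (div_pos one_pos (hdpos i)).le) (Finset.mem_univ i₀)
  · have h1 : ∑ i, 1 / (1 + (s i₀) ^ 2 / s i - s i) ≤ ∑ _i : Fin N, (1:ℝ) := by
      apply Finset.sum_le_sum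
      intro i _
      rw [div_le_one (hdpos i)]
      exact hd1 i
    simpa using h1
  · intro hall
    have heq : ∀ i, s i = s i₀ := fun i => hall i i₀
    have : ∀ i, (1 : ℝ) / (1 + (s i₀) ^ 2 / s i - s i) = 1 := by
      intro i
      rw [heq i]
      exact hterm0
    rw [Finset.sum_congr rfl (fun i _ => this i)]
    simp
end
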